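/- Let F be a 3-colored complete graph on exactly 4 vertices in which every set of three vertices spans a rainbow triangle (i.e., no triangle avoids any of the three colors). Then each of the three colors appears on exactly two edges of F forming a perfect matching; in particular, F is isomorphic (as a colored graph, up to permuting the colors) to F_4. -/

import Mathlib

/-- A `k`-colored complete graph on vertex set `Fin n`: a symmetric assignment of a
color in `Fin k` to each pair of vertices (the diagonal values are irrelevant). -/
def IsColoring {n k : ℕ} (G : Fin n → Fin n → Fin k) : Prop :=
  ∀ u v : Fin n, G u v = G v u

/-- `φ` is a copy of the `k`-colored complete graph `F` in `G`: an injection of the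
vertices preserving all edge colors. -/
def IsCopy {m n k : ℕ} (F : Fin m → Fin m → Fin k) (G : Fin n → Fin n → Fin k)
    (φ : Fin m → Fin n) : Prop :=
  Function.Injective φ ∧ ∀ u v : Fin m, u ≠ v → G (φ u) (φ v) = F u v

/-- The number of copies of `F` in `G`. -/
noncomputable def copyCount {m n k : ℕ} (F : Fin m → Fin m → Fin k)
    (G : Fin n → Fin n → Fin k) : ℕ :=
  Nat.card {φ : Fin m → Fin n // IsCopy F G φ}

/-- A family of pairwise pair-disjoint copies: any two distinct members share at most
one vertex. -/
def PairDisjointFamily {m n : ℕ} (Φ : Finset (Fin m → Fin n)) : Prop :=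
  ∀ φ ∈ Φ, ∀ ψ ∈ Φ, φ ≠ ψ → (Set.range φ ∩ Set.range ψ).ncard ≤ 1

/-- `G` contains a collection of at least `t` pairwise pair-disjoint copies of `F`. -/
def HasDisjointCopies {m n k : ℕ} (F : Fin m → Fin m → Fin k)
    (G : Fin n → Fin n → Fin k) (t : ℝ) : Prop :=
  ∃ Φ : Finset (Fin m → Fin n), t ≤ (Φ.card : ℝ) ∧
    (∀ φ ∈ Φ, IsCopy F G φ) ∧ PairDisjointFamily Φ

/-- The number of (unordered) edges whose colors differ between `G` and `G'`. -/
noncomputable def changedEdges {n k : ℕ} (G G' : Fin n → Fin n → Fin k) : ℕ :=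
  Nat.card {p : Fin n × Fin n // p.1 < p.2 ∧ G p.1 p.2 ≠ G' p.1 p.2}

/-- The 3-colored complete graph `F₄` on four vertices in which each color class is a
perfect matching: `{0,1},{2,3}` have color `0`; `{0,3},{1,2}` have color `1`;
`{0,2},{1,3}` have color `2`. -/
def F4 : Fin 4 → Fin 4 → Fin 3 := fun i j =>
  if (i = 0 ∧ j = 1) ∨ (i = 1 ∧ j = 0) ∨ (i = 2 ∧ j = 3) ∨ (i = 3 ∧ j = 2) then 0
  else if (i = 0 ∧ j = 3) ∨ (i = 3 ∧ j = 0) ∨ (i = 1 ∧ j = 2) ∨ (i = 2 ∧ j = 1) then 1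
  else 2

/-! In a 3-coloring with all triangles rainbow, the edges at a vertex get distinct colors.
For distinct `u, v, x, y`, both `uv` and `xy` then avoid the two distinct colors of `ux` and
`vx`, so opposite edges share the third color. Applied to both orientations of an edge this
also gives symmetry, so `F` is `F4` with its colors renamed by the three colors at vertex `0`. -/

lemma Fin.eq_of_ne_of_ne_three {a b c d : Fin 3} (hab : a ≠ b) (hca : c ≠ a) (hcb : c ≠ b)
    (hda : d ≠ a) (hdb : d ≠ b) : c = d := by
  omega

def AllTrianglesRainbow {V : Type*} (F : V → V → Fin 3) : Prop :=
  ∀ u v w : V, u ≠ v → u ≠ w → v ≠ w → F u v ≠ F u w ∧ F u v ≠ F v w ∧ F u w ≠ F v w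

namespace AllTrianglesRainbow

variable {V : Type*} {F : V → V → Fin 3}

theorem opposite_edges_eq (hF : AllTrianglesRainbow F) {u v x y : V} (huv : u ≠ v)
    (hux : u ≠ x) (huy : u ≠ y) (hvx : v ≠ x) (hvy : v ≠ y) (hxy : x ≠ y) :
    F u v = F x y := by
  obtain ⟨h₁, h₂, h₃⟩ := hF u v x huv hux hvx
  have h₄ := (hF u x y hux huy hxy).2.1
  have h₅ := (hF v x y hvx hvy hxy).2.1
  exact Fin.eq_of_ne_of_ne_three h₃ h₁ h₂ h₄.symm h₅.symm

theorem apply_comm [Fintype V] [DecidableEq V] (hV : 4 ≤ Fintype.card V)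
    (hF : AllTrianglesRainbow F) {u v : V} (huv : u ≠ v) : F u v = F v u := by
  have hcard : 1 < ({u, v}ᶜ : Finset V).card := by
    rw [Finset.card_compl, Finset.card_pair huv]; omega
  obtain ⟨x, hx, y, hy, hxy⟩ := Finset.one_lt_card.mp hcard
  simp only [Finset.mem_compl, Finset.mem_insert, Finset.mem_singleton, not_or] at hx hy
  rw [hF.opposite_edges_eq huv (Ne.symm hx.1) (Ne.symm hy.1) (Ne.symm hx.2) (Ne.symm hy.2) hxy,
    hF.opposite_edges_eq huv.symm (Ne.symm hx.2) (Ne.symm hy.2) (Ne.symm hx.1) (Ne.symm hy.1) hxy]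

end AllTrianglesRainbow

theorem F4_exists_edge_color (c : Fin 3) : ∃ u v : Fin 4, u ≠ v ∧ F4 u v = c := by
  fin_cases c
  exacts [⟨0, 1, by decide, rfl⟩, ⟨0, 3, by decide, rfl⟩, ⟨0, 2, by decide, rfl⟩]

namespace AllTrianglesRainbow

variable {F : Fin 4 → Fin 4 → Fin 3}

-- `c ↦ F 0 v` for the vertex `v` with `F4 0 v = c`.
def colorAtZero (F : Fin 4 → Fin 4 → Fin 3) : Fin 3 → Fin 3 := ![F 0 1, F 0 3, F 0 2]

theorem colorAtZero_injective (hF : AllTrianglesRainbow F) : (colorAtZero F).Injective := by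
  have h₁₂ := (hF 0 1 2 (by decide) (by decide) (by decide)).1
  have h₁₃ := (hF 0 1 3 (by decide) (by decide) (by decide)).1
  have h₂₃ := (hF 0 2 3 (by decide) (by decide) (by decide)).1
  intro i j hij
  fin_cases i <;> fin_cases j <;> simp_all [colorAtZero, eq_comm]

noncomputable def recoloring (hF : AllTrianglesRainbow F) : Fin 3 ≃ Fin 3 :=
  Equiv.ofBijective _ (Finite.injective_iff_bijective.mp hF.colorAtZero_injective)

theorem apply_eq_recoloring_F4 (hF : AllTrianglesRainbow F) {u v : Fin 4} (huv : u ≠ v) :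
    F u v = hF.recoloring (F4 u v) := by
  fin_cases u <;> fin_cases v <;>
    first
      | exact absurd rfl huv
      | rfl
      | exact hF.apply_comm (by simp) (by decide)
      | exact hF.opposite_edges_eq (by decide) (by decide) (by decide) (by decide) (by decide)
          (by decide)

end AllTrianglesRainbow

theorem all_triangles_rainbow_iff_F4_general (F : Fin 4 → Fin 4 → Fin 3)
    (hrb : ∀ u v w : Fin 4, u ≠ v → u ≠ w → v ≠ w →
      F u v ≠ F u w ∧ F u v ≠ F v w ∧ F u w ≠ F v w) :
    ((∀ u v x y : Fin 4, u ≠ v → u ≠ x → u ≠ y → v ≠ x → v ≠ y → x ≠ y →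
        F u v = F x y) ∧
      (∀ c : Fin 3, ∃ u v : Fin 4, u ≠ v ∧ F u v = c)) ∧
    ∃ e : Fin 4 ≃ Fin 4, ∃ σ : Fin 3 ≃ Fin 3,
      ∀ u v : Fin 4, u ≠ v → F (e u) (e v) = σ (F4 u v) := by
  have hF : AllTrianglesRainbow F := hrb
  refine ⟨⟨fun u v x y ↦ hF.opposite_edges_eq, fun c ↦ ?_⟩,
    Equiv.refl _, hF.recoloring, fun u v ↦ hF.apply_eq_recoloring_F4⟩
  obtain ⟨u, v, huv, hc⟩ := F4_exists_edge_color (hF.recoloring.symm c)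
  exact ⟨u, v, huv, by rw [hF.apply_eq_recoloring_F4 huv, hc, Equiv.apply_symm_apply]⟩

/-- If `F` is a 3-colored complete graph on 4 vertices in which every
three vertices span a rainbow triangle, then opposite edges of `F` get the same color
and every color appears (i.e. each color appears on exactly two edges forming a
perfect matching); in particular `F` is isomorphic to `F₄` up to permuting the
colors. -/
theorem all_triangles_rainbow_iff_F4 (F : Fin 4 → Fin 4 → Fin 3) (hF : IsColoring F)
    (hrb : ∀ u v w : Fin 4, u ≠ v → u ≠ w → v ≠ w →
      F u v ≠ F u w ∧ F u v ≠ F v w ∧ F u w ≠ F v w) :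
    ((∀ u v x y : Fin 4, u ≠ v → u ≠ x → u ≠ y → v ≠ x → v ≠ y → x ≠ y →
        F u v = F x y) ∧
      (∀ c : Fin 3, ∃ u v : Fin 4, u ≠ v ∧ F u v = c)) ∧
    ∃ e : Fin 4 ≃ Fin 4, ∃ σ : Fin 3 ≃ Fin 3,
      ∀ u v : Fin 4, u ≠ v → F (e u) (e v) = σ (F4 u v) :=
  all_triangles_rainbow_iff_F4_general F hrb
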